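/- Let H < G be countable groups with G ICC (every non-trivial conjugacy class of G is infinite) and [G : H] < ∞. If H has the non-factorizable regular character property, then G also has the non-factorizable regular character property. -/

import Mathlib

open scoped BigOperators ComplexOrder

/-- A character on a group `G`: a normalized, conjugation-invariant,
positive definite complex-valued function. -/
def IsCharacter {G : Type*} [Group G] (χ : G → ℂ) : Prop :=
  χ 1 = 1 ∧ (∀ g h : G, χ (h * g * h⁻¹) = χ g) ∧
    ∀ (n : ℕ) (g : Fin n → G) (α : Fin n → ℂ),
      0 ≤ ∑ i, ∑ j, (starRingEnd ℂ) (α i) * α j * χ ((g i)⁻¹ * g j)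

open scoped Classical in
/-- The regular character of `G` is non-factorizable: whenever two characters
`φ, ψ` satisfy `φ s * ψ s = 0` for every `s ≠ 1`, one of them is `δ_e`. -/
def HasNonfactorizableRegularCharacter (G : Type*) [Group G] : Prop :=
  ∀ φ ψ : G → ℂ, IsCharacter φ → IsCharacter ψ →
    (∀ s : G, s ≠ 1 → φ s * ψ s = 0) →
    (φ = fun g => if g = 1 then 1 else 0) ∨ (ψ = fun g => if g = 1 then 1 else 0)

/-!
A character `χ` of an ICC group `G` that vanishes on `H \ {1}`, for `H` of finite index, is `δ_e`:
the conjugacy class of `g ≠ 1` is infinite, so infinitely many conjugates `gₙ` of `g` lie in one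
coset of `H`; then `χ (gₙ⁻¹ * gₘ) = 0` for `n ≠ m`, and positive definiteness forces
`n |χ g|² ≤ 1` for every `n`. Restricting `φ, ψ` to `H` and using the property of `H` thus gives it for `G`.
-/

namespace IsCharacter

variable {G : Type*} [Group G] {χ : G → ℂ}

lemma comp {K : Type*} [Group K] (hχ : IsCharacter χ) (f : K →* G) : IsCharacter (χ ∘ f) := by
  refine ⟨by simpa using hχ.1, fun g h => by simpa using hχ.2.1 (f g) (f h), fun n g α => ?_⟩
  simpa using hχ.2.2 n (f ∘ g) α

lemma apply_eq_of_isConj (hχ : IsCharacter χ) {g x : G} (h : IsConj g x) : χ x = χ g := by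
  obtain ⟨c, rfl⟩ := isConj_iff.1 h
  exact hχ.2.1 g c

lemma map_inv (hχ : IsCharacter χ) (g : G) : χ g⁻¹ = starRingEnd ℂ (χ g) := by
  have h1 := hχ.2.2 2 ![1, g] ![1, 1]
  have h2 := hχ.2.2 2 ![1, g] ![1, Complex.I]
  simp only [Fin.sum_univ_two, Matrix.cons_val_zero, Matrix.cons_val_one, inv_one, one_mul, mul_one, map_one,
    hχ.1, Complex.conj_I] at h1 h2
  rw [Complex.le_def] at h1 h2
  apply Complex.ext <;> simp [hχ.1] at h1 h2 ⊢ <;> linarith [h1.2, h2.2]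

/-- Testing `χ` against `(1, u₁, …, uₙ)` with weights `(1, -ā, …, -ā)` gives `0 ≤ 1 - n |a|²`. -/
lemma natCast_mul_normSq_le_one (hχ : IsCharacter χ) {n : ℕ} {a : ℂ} (u : Fin n → G)
    (hu : ∀ i, χ (u i) = a) (horth : Pairwise fun i j => χ ((u i)⁻¹ * u j) = 0) :
    n * Complex.normSq a ≤ 1 := by
  have hdiag : ∀ i j, χ ((u i)⁻¹ * u j) = if i = j then 1 else 0 := by
    intro i j
    split_ifs with hij
    · simp [hij, hχ.1]
    · exact horth hij
  have h := hχ.2.2 (n + 1) (Fin.cons 1 u) (Fin.cons 1 fun _ => -starRingEnd ℂ a)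
  simp only [Fin.sum_univ_succ, Fin.cons_zero, Fin.cons_succ, map_one, map_neg, Complex.conj_conj, inv_one,
    one_mul, mul_one, hχ.1, hχ.map_inv, hu, hdiag, mul_ite, mul_zero, Finset.sum_ite_eq, Finset.mem_univ,
    if_true, Finset.sum_const, Finset.card_univ, Fintype.card_fin, nsmul_eq_mul] at h
  rw [Complex.le_def] at h
  simp [Complex.normSq_apply] at h ⊢
  nlinarith [h.1]

lemma eq_zero_of_infinite (hχ : IsCharacter χ) {a : ℂ} {T : Set G} (hT : T.Infinite)
    (hconst : ∀ x ∈ T, χ x = a) (horth : T.Pairwise fun x y => χ (x⁻¹ * y) = 0) : a = 0 := by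
  by_contra ha
  obtain ⟨n, hn⟩ := exists_nat_gt (Complex.normSq a)⁻¹
  let u : Fin n → G := fun i => hT.natEmbedding T i
  have hu_inj : u.Injective := fun i j hij =>
    Fin.ext <| (hT.natEmbedding T).injective (Subtype.ext hij)
  have hle := hχ.natCast_mul_normSq_le_one u (fun i => hconst _ (hT.natEmbedding T i).2)
    fun i j hij => horth (hT.natEmbedding T i).2 (hT.natEmbedding T j).2 (hu_inj.ne hij)
  have hpos : 0 < Complex.normSq a := Complex.normSq_pos.2 ha
  rw [inv_lt_iff_one_lt_mul₀ hpos] at hn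
  linarith

end IsCharacter

lemma Set.Infinite.exists_infinite_inter_preimage_mk {G : Type*} [Group G] {H : Subgroup G}
    [H.FiniteIndex] {S : Set G} (hS : S.Infinite) :
    ∃ q : G ⧸ H, (S ∩ QuotientGroup.mk ⁻¹' {q}).Infinite := by
  by_contra! hfinite
  refine hS (Set.Finite.subset (Set.finite_iUnion hfinite) fun x hx => ?_)
  exact Set.mem_iUnion.2 ⟨x, hx, rfl⟩

open scoped Classical in
lemma IsCharacter.eq_delta_of_eq_zero_on_subgroup {G : Type*} [Group G] {H : Subgroup G}
    [H.FiniteIndex] (hICC : ∀ g : G, g ≠ 1 → {x : G | IsConj g x}.Infinite) {χ : G → ℂ}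
    (hχ : IsCharacter χ) (hvan : ∀ h ∈ H, h ≠ 1 → χ h = 0) :
    χ = fun g => if g = 1 then 1 else 0 := by
  funext g
  split_ifs with hg
  · rw [hg, hχ.1]
  obtain ⟨q, hT⟩ := (hICC g hg).exists_infinite_inter_preimage_mk (H := H)
  refine hχ.eq_zero_of_infinite hT (fun x hx => hχ.apply_eq_of_isConj hx.1) ?_
  rintro x ⟨-, hxq⟩ y ⟨-, hyq⟩ hxy
  refine hvan _ (QuotientGroup.eq.1 (hxq.trans hyq.symm)) ?_
  rwa [Ne, inv_mul_eq_one]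

theorem nfrc_of_finiteIndex_subgroup_general
    {G : Type*} [Group G] (H : Subgroup G)
    (hICC : ∀ g : G, g ≠ 1 → {x : G | IsConj g x}.Infinite)
    (hfin : H.FiniteIndex)
    (hH : HasNonfactorizableRegularCharacter H) :
    HasNonfactorizableRegularCharacter G := by
  intro φ ψ hφ hψ horth
  have horthH : ∀ s : H, s ≠ 1 → (φ ∘ H.subtype) s * (ψ ∘ H.subtype) s = 0 := fun s hs =>
    horth s (by simpa using hs)
  refine (hH _ _ (hφ.comp H.subtype) (hψ.comp H.subtype) horthH).imp (fun hφH => ?_) fun hψH => ?_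
  · exact hφ.eq_delta_of_eq_zero_on_subgroup hICC fun h hh h1 => by
      simpa [h1] using congrFun hφH ⟨h, hh⟩
  · exact hψ.eq_delta_of_eq_zero_on_subgroup hICC fun h hh h1 => by
      simpa [h1] using congrFun hψH ⟨h, hh⟩

theorem nfrc_of_finiteIndex_subgroup
    {G : Type*} [Group G] [Countable G] (H : Subgroup G)
    (hICC : ∀ g : G, g ≠ 1 → {x : G | IsConj g x}.Infinite)
    (hfin : H.FiniteIndex)
    (hH : HasNonfactorizableRegularCharacter H) :
    HasNonfactorizableRegularCharacter G :=
  nfrc_of_finiteIndex_subgroup_general H hICC hfin hH
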